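/- There is a constant C > 0 depending only on d such that for all x, y, y' ∈ ℝ^d and all t > 0, writing D(z,t) := (∂_r W_r(z)) evaluated at r = e^{−t}, one has |D(x−y, t) − D(x−y', t)| ≤ C · (|y−y'|/√t) · t^{−d/2−1}. -/

import Mathlib

set_option maxHeartbeats 1000000
set_option synthInstance.maxHeartbeats 400000

open MeasureTheory

/-- The Mehler kernel `M_r(x,y)`. -/
noncomputable def mehler (d : ℕ) (r : ℝ) (x y : EuclideanSpace ℝ (Fin d)) : ℝ :=
  Real.pi ^ (-(d : ℝ) / 2) * (1 - r ^ 2) ^ (-(d : ℝ) / 2) *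
    Real.exp (-‖r • x - y‖ ^ 2 / (1 - r ^ 2))

/-- The heat-type kernel `W_r(z)`. -/
noncomputable def wkernel (d : ℕ) (r : ℝ) (z : EuclideanSpace ℝ (Fin d)) : ℝ :=
  Real.pi ^ (-(d : ℝ) / 2) * (1 - r ^ 2) ^ (-(d : ℝ) / 2) *
    Real.exp (-‖z‖ ^ 2 / (1 - r ^ 2))

/-- The local region `N_s`. -/
def localRegion (d : ℕ) (s : ℝ) :
    Set (EuclideanSpace ℝ (Fin d) × EuclideanSpace ℝ (Fin d)) :=
  {p | ‖p.1 - p.2‖ ≤ s / (1 + ‖p.1‖ + ‖p.2‖)}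

/-- `D(z,t) = (∂_r W_r(z))` evaluated at `r = e^{-t}`. -/
noncomputable def Dker (d : ℕ) (z : EuclideanSpace ℝ (Fin d)) (t : ℝ) : ℝ :=
  deriv (fun r => wkernel d r z) (Real.exp (-t))

lemma hasDerivAt_wkernel (d : ℕ) (z : EuclideanSpace ℝ (Fin d)) {r : ℝ} (hu : 0 < 1 - r ^ 2) :
    HasDerivAt (fun r => wkernel d r z)
      (Real.pi ^ (-(d : ℝ) / 2) * r * (1 - r ^ 2) ^ (-(d : ℝ) / 2 - 1) *
        Real.exp (-‖z‖ ^ 2 / (1 - r ^ 2)) * ((d : ℝ) - 2 * ‖z‖ ^ 2 / (1 - r ^ 2))) r := by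
  have h1 : HasDerivAt (fun r : ℝ => 1 - r ^ 2) (-(2 * r)) r := by
    simpa using (hasDerivAt_pow 2 r).const_sub 1
  have h2 : HasDerivAt (fun v : ℝ => v ^ (-(d : ℝ) / 2))
      ((-(d : ℝ) / 2) * (1 - r ^ 2) ^ (-(d : ℝ) / 2 - 1)) (1 - r ^ 2) :=
    Real.hasDerivAt_rpow_const (Or.inl hu.ne')
  have hB : HasDerivAt (fun r : ℝ => (1 - r ^ 2) ^ (-(d : ℝ) / 2))
      ((-(d : ℝ) / 2) * (1 - r ^ 2) ^ (-(d : ℝ) / 2 - 1) * -(2 * r)) r := HasDerivAt.comp (h := fun r : ℝ => 1 - r ^ 2) r h2 h1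
  have h3 : HasDerivAt (fun v : ℝ => -‖z‖ ^ 2 / v)
      (-‖z‖ ^ 2 * -(((1 - r ^ 2) ^ 2)⁻¹)) (1 - r ^ 2) := by
    simpa [div_eq_mul_inv] using (hasDerivAt_inv hu.ne').const_mul (-‖z‖ ^ 2)
  have hC : HasDerivAt (fun r : ℝ => Real.exp (-‖z‖ ^ 2 / (1 - r ^ 2)))
      (Real.exp (-‖z‖ ^ 2 / (1 - r ^ 2)) * (-‖z‖ ^ 2 * -(((1 - r ^ 2) ^ 2)⁻¹) * -(2 * r))) r :=
    (h3.comp r h1).exp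
  have hW := (hB.const_mul (Real.pi ^ (-(d : ℝ) / 2))).mul hC
  have hfun : (fun r => wkernel d r z) =
      fun r : ℝ => Real.pi ^ (-(d : ℝ) / 2) * (1 - r ^ 2) ^ (-(d : ℝ) / 2) *
        Real.exp (-‖z‖ ^ 2 / (1 - r ^ 2)) := rfl
  rw [hfun]
  convert hW using 1
  any_goals rfl
  have hup : (1 - r ^ 2) ^ (-(d : ℝ) / 2) =
      (1 - r ^ 2) ^ (-(d : ℝ) / 2 - 1) * (1 - r ^ 2) := by
    rw [← Real.rpow_add_one hu.ne']
    norm_num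
  rw [hup]
  field_simp
  ring

lemma aux_w (d : ℕ) {w : ℝ} (hw : 0 ≤ w) :
    Real.sqrt w * (Real.exp (-w) * (2 * w + d + 2)) ≤ 2 * d + 14 := by
  have hd : (0:ℝ) ≤ d := Nat.cast_nonneg d
  have hs : Real.sqrt w ≤ 1 + w := by
    nlinarith [Real.sq_sqrt hw, Real.sqrt_nonneg w]
  have hE : 0 < Real.exp w := Real.exp_pos w
  have hEinv : Real.exp (-w) = (Real.exp w)⁻¹ := Real.exp_neg w
  have h1 : 1 + w ≤ Real.exp w := by linarith [Real.add_one_le_exp w]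
  have h2 : w ^ 2 / 4 ≤ Real.exp w := by
    have h := Real.add_one_le_exp (w / 2)
    have hew : Real.exp (w/2) * Real.exp (w/2) = Real.exp w := by
      rw [← Real.exp_add]; ring_nf
    nlinarith [Real.exp_pos (w/2)]
  have key : (1 + w) * (Real.exp (-w) * (2 * w + d + 2)) ≤ 2 * d + 14 := by
    rw [hEinv]
    have expand : (1 + w) * ((Real.exp w)⁻¹ * (2 * w + d + 2)) =
        (2 * w ^ 2 + (d + 4) * w + (d + 2)) * (Real.exp w)⁻¹ := by
      field_simp; ring
    rw [expand, ← div_eq_mul_inv, div_le_iff₀ hE]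
    nlinarith [h1, h2]
  have hpos : 0 ≤ Real.exp (-w) * (2 * w + d + 2) := by positivity
  calc Real.sqrt w * (Real.exp (-w) * (2 * w + d + 2))
      ≤ (1 + w) * (Real.exp (-w) * (2 * w + d + 2)) :=
        mul_le_mul_of_nonneg_right hs hpos
    _ ≤ 2 * d + 14 := key

lemma Dker_lip (d : ℕ) {t : ℝ} (ht : 0 < t) (z z' : EuclideanSpace ℝ (Fin d)) :
    |Dker d z t - Dker d z' t| ≤
      2 * Real.pi ^ (-(d : ℝ) / 2) * (2 * d + 14) *
        (Real.exp (-t) * (1 - Real.exp (-t) ^ 2) ^ (-(((d : ℝ) + 3) / 2))) * ‖z - z'‖ := by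
  set r : ℝ := Real.exp (-t) with hr_def
  have hr0 : 0 < r := Real.exp_pos _
  have hr1 : r < 1 := Real.exp_lt_one_iff.2 (by linarith)
  have hu : 0 < 1 - r ^ 2 := by nlinarith
  set u : ℝ := 1 - r ^ 2 with hu_def
  set A : ℝ := Real.pi ^ (-(d : ℝ) / 2) with hA_def
  have hA : 0 < A := Real.rpow_pos_of_pos Real.pi_pos _
  have hd : (0:ℝ) ≤ d := Nat.cast_nonneg d
  set c : ℝ := A * r * u ^ (-(d : ℝ) / 2 - 1) with hc_def
  have hc : 0 < c := by
    have := Real.rpow_pos_of_pos hu (-(d : ℝ) / 2 - 1)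
    positivity
  -- the explicit form of Dker
  set F : EuclideanSpace ℝ (Fin d) → ℝ :=
    fun z => c * Real.exp (-‖z‖ ^ 2 / u) * ((d : ℝ) - 2 * ‖z‖ ^ 2 / u) with hF_def
  have hDF : ∀ z : EuclideanSpace ℝ (Fin d), Dker d z t = F z := fun z =>
    (hasDerivAt_wkernel d z hu).deriv
  -- derivative of F
  set g' : ℝ → ℝ := fun s =>
    c * (Real.exp (-s / u) * (-1 / u)) * ((d : ℝ) - 2 * s / u) +
      c * Real.exp (-s / u) * (-(2 / u)) with hg'_def
  have hG : ∀ s : ℝ, HasDerivAt (fun s : ℝ => c * Real.exp (-s / u) * ((d : ℝ) - 2 * s / u))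
      (g' s) s := by
    intro s
    have hexp : HasDerivAt (fun s : ℝ => Real.exp (-s / u)) (Real.exp (-s / u) * (-1 / u)) s := by
      have h0 : HasDerivAt (fun s : ℝ => -s / u) (-1 / u) s := (hasDerivAt_id s).neg.div_const u
      exact h0.exp
    have hlin : HasDerivAt (fun s : ℝ => (d : ℝ) - 2 * s / u) (-(2 / u)) s := by
      have h0 := (((hasDerivAt_id s).const_mul 2).div_const u).const_sub (d : ℝ)
      simpa [mul_one] using h0
    exact (hexp.const_mul c).mul hlin
  have hF' : ∀ x : EuclideanSpace ℝ (Fin d),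
      HasFDerivAt F ((g' (‖x‖ ^ 2)) • (2 • (innerSL ℝ x))) x := by
    intro x
    have hq : HasFDerivAt (fun y : EuclideanSpace ℝ (Fin d) => ‖y‖ ^ 2)
        (2 • (innerSL ℝ x)) x := (hasStrictFDerivAt_norm_sq x).hasFDerivAt
    exact (hG (‖x‖ ^ 2)).comp_hasFDerivAt x hq
  -- bound on the derivative
  set K : ℝ := 2 * A * (2 * d + 14) * (r * u ^ (-(((d : ℝ) + 3) / 2))) with hK_def
  have hKbound : ∀ x : EuclideanSpace ℝ (Fin d), ‖(g' (‖x‖ ^ 2)) • (2 • (innerSL ℝ x))‖ ≤ K := by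
    intro x
    set q : ℝ := ‖x‖ ^ 2 with hq_def
    have hq0 : 0 ≤ q := sq_nonneg _
    set w : ℝ := q / u with hw_def
    have hw : 0 ≤ w := by positivity
    have hnorm1 : ‖(g' q) • (2 • (innerSL ℝ x))‖ ≤ |g' q| * (2 * ‖x‖) := by
      have h2T : ‖(2 • (innerSL ℝ x) : EuclideanSpace ℝ (Fin d) →L[ℝ] ℝ)‖ ≤ 2 * ‖x‖ := by
        rw [two_smul]
        calc ‖innerSL ℝ x + innerSL ℝ x‖ ≤ ‖innerSL ℝ x‖ + ‖innerSL ℝ x‖ := norm_add_le _ _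
          _ = 2 * ‖x‖ := by rw [innerSL_apply_norm]; ring
      calc ‖(g' q) • (2 • (innerSL ℝ x))‖ ≤ ‖g' q‖ * ‖(2 • (innerSL ℝ x) :
              EuclideanSpace ℝ (Fin d) →L[ℝ] ℝ)‖ := norm_smul_le _ _
        _ ≤ |g' q| * (2 * ‖x‖) := by
            rw [Real.norm_eq_abs]
            exact mul_le_mul_of_nonneg_left h2T (abs_nonneg (g' q))
    have hexpw : Real.exp (-q / u) = Real.exp (-w) := by rw [neg_div]
    have habs : |g' q| ≤ c * Real.exp (-w) * (2 * w + d + 2) / u := by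
      have hg'eq : g' q = -(c * Real.exp (-w) * (((d : ℝ) + 2 - 2 * w) / u)) := by
        rw [hg'_def]
        simp only [hexpw]
        rw [hw_def]
        field_simp
        ring
      rw [hg'eq, abs_neg]
      have h1 : |c * Real.exp (-w) * (((d : ℝ) + 2 - 2 * w) / u)| =
          c * Real.exp (-w) * (|(d : ℝ) + 2 - 2 * w| / u) := by
        rw [abs_mul, abs_mul, abs_div]
        rw [abs_of_pos hc, abs_of_pos (Real.exp_pos _), abs_of_pos hu]
      rw [h1]
      have h2 : |(d : ℝ) + 2 - 2 * w| ≤ 2 * w + d + 2 := by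
        rw [abs_le]; constructor <;> linarith
      have h3 : (0:ℝ) ≤ c * Real.exp (-w) := by positivity
      calc c * Real.exp (-w) * (|(d : ℝ) + 2 - 2 * w| / u)
          ≤ c * Real.exp (-w) * ((2 * w + d + 2) / u) := by gcongr
        _ = c * Real.exp (-w) * (2 * w + d + 2) / u := by ring
    have hqe : q = w * u := by rw [hw_def]; field_simp
    have hnx : ‖x‖ = Real.sqrt w * Real.sqrt u := by
      rw [← Real.sqrt_mul hw u, ← hqe, hq_def, Real.sqrt_sq (norm_nonneg x)]
    have hupos := Real.rpow_pos_of_pos hu (-(((d : ℝ) + 3) / 2))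
    have hkey : c / u * Real.sqrt u = A * r * u ^ (-(((d : ℝ) + 3) / 2)) := by
      rw [hc_def, Real.sqrt_eq_rpow, div_eq_mul_inv, ← Real.rpow_neg_one u,
        mul_assoc, mul_assoc, ← Real.rpow_add hu, ← Real.rpow_add hu]
      congr 1
      ring
    have h5 : (0:ℝ) ≤ 2 * (A * r * u ^ (-(((d : ℝ) + 3) / 2))) :=
      mul_nonneg (by norm_num) (mul_nonneg (mul_nonneg hA.le hr0.le) hupos.le)
    calc ‖(g' q) • (2 • (innerSL ℝ x))‖ ≤ |g' q| * (2 * ‖x‖) := hnorm1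
      _ ≤ c * Real.exp (-w) * (2 * w + d + 2) / u * (2 * ‖x‖) :=
          mul_le_mul_of_nonneg_right habs (by positivity)
      _ = 2 * (c / u * Real.sqrt u) * (Real.sqrt w * (Real.exp (-w) * (2 * w + d + 2))) := by
          rw [hnx]; ring
      _ ≤ 2 * (A * r * u ^ (-(((d : ℝ) + 3) / 2))) * (2 * d + 14) := by
          rw [hkey]
          exact mul_le_mul_of_nonneg_left (aux_w d hw) h5
      _ = K := by rw [hK_def]; ring
  -- mean value inequality
  have hmvt := convex_univ.norm_image_sub_le_of_norm_hasFDerivWithin_le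
      (fun x _ => (hF' x).hasFDerivWithinAt) (fun x _ => hKbound x)
      (Set.mem_univ z') (Set.mem_univ z)
  rw [hDF z, hDF z', ← Real.norm_eq_abs]
  calc ‖F z - F z'‖ ≤ K * ‖z - z'‖ := hmvt
    _ = 2 * A * (2 * d + 14) * (r * u ^ (-(((d : ℝ) + 3) / 2))) * ‖z - z'‖ := by
        rw [hK_def]
    _ = _ := rfl

lemma aux_rate (d : ℕ) {t : ℝ} (ht : 0 < t) :
    Real.exp (-t) * (1 - Real.exp (-t) ^ 2) ^ (-(((d : ℝ) + 3) / 2)) ≤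
      (4 : ℝ) ^ (((d : ℝ) + 3) / 2) * (d + 2).factorial * t ^ (-(((d : ℝ) + 3) / 2)) := by
  set a : ℝ := ((d : ℝ) + 3) / 2 with ha_def
  have ha : 0 < a := by positivity
  have had : a ≤ (d : ℝ) + 2 := by
    rw [ha_def]
    have : (0:ℝ) ≤ d := Nat.cast_nonneg d
    linarith
  have hE2 : Real.exp (-t) ^ 2 = Real.exp (-(2 * t)) := by
    rw [← Real.exp_nat_mul]; ring_nf
  have hu : 0 < 1 - Real.exp (-t) ^ 2 := by
    rw [hE2]
    have : Real.exp (-(2 * t)) < 1 := Real.exp_lt_one_iff.2 (by linarith)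
    linarith
  have hfac : (1:ℝ) ≤ (d + 2).factorial := by
    exact_mod_cast Nat.one_le_iff_ne_zero.2 (Nat.factorial_ne_zero _)
  have hexp2le : Real.exp 2 ≤ 8 := by
    have h := Real.exp_one_lt_d9
    have h2 : Real.exp 2 = Real.exp 1 * Real.exp 1 := by rw [← Real.exp_add]; norm_num
    nlinarith [Real.exp_pos 1]
  have htpos : (0:ℝ) < t ^ (-a) := Real.rpow_pos_of_pos ht _
  have h4pos : (0:ℝ) < (4:ℝ) ^ a := Real.rpow_pos_of_pos (by norm_num) _
  rcases le_or_gt t 1 with h1 | h1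
  · -- small time: 1 - e^{-2t} ≥ t/4
    have hge : t / 4 ≤ 1 - Real.exp (-t) ^ 2 := by
      rw [hE2]
      have hkey : 2 * t * Real.exp (-(2 * t)) ≤ 1 - Real.exp (-(2 * t)) := by
        have h := Real.add_one_le_exp (2 * t)
        have hEpos : 0 < Real.exp (-(2 * t)) := Real.exp_pos _
        have hmul : Real.exp (2 * t) * Real.exp (-(2 * t)) = 1 := by
          rw [← Real.exp_add]; norm_num
        nlinarith
      have hEge : (1:ℝ)/8 ≤ Real.exp (-(2 * t)) := by
        have hmono : Real.exp (-(2:ℝ)) ≤ Real.exp (-(2 * t)) := Real.exp_le_exp.2 (by linarith)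
        have h8 : (1:ℝ)/8 ≤ Real.exp (-(2:ℝ)) := by
          rw [Real.exp_neg, one_div, inv_le_inv₀ (by norm_num) (Real.exp_pos 2)]
          linarith
        linarith
      nlinarith
    have hrpow : (1 - Real.exp (-t) ^ 2) ^ (-a) ≤ (t / 4) ^ (-a) :=
      Real.rpow_le_rpow_of_nonpos (by positivity) hge (by linarith)
    have hq : (t / 4) ^ (-a) = 4 ^ a * t ^ (-a) := by
      rw [Real.rpow_neg (by positivity), Real.div_rpow ht.le (by norm_num), Real.rpow_neg ht.le]
      field_simp
    have he1 : Real.exp (-t) ≤ 1 := Real.exp_le_one_iff.2 (by linarith)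
    calc Real.exp (-t) * (1 - Real.exp (-t) ^ 2) ^ (-a)
        ≤ 1 * ((t / 4) ^ (-a)) :=
          mul_le_mul he1 hrpow (by positivity) (by norm_num)
      _ = 4 ^ a * t ^ (-a) := by rw [one_mul, hq]
      _ ≤ 4 ^ a * (d + 2).factorial * t ^ (-a) :=
          mul_le_mul_of_nonneg_right (le_mul_of_one_le_right h4pos.le hfac) htpos.le
  · -- large time
    have hEle : Real.exp (-t) ^ 2 ≤ 1/2 := by
      rw [hE2]
      have hmono : Real.exp (-(2 * t)) ≤ Real.exp (-(2:ℝ)) := Real.exp_le_exp.2 (by linarith)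
      have h8 : Real.exp (-(2:ℝ)) ≤ 1/2 := by
        rw [Real.exp_neg, one_div, inv_le_inv₀ (Real.exp_pos 2) (by norm_num)]
        linarith [Real.add_one_le_exp (2:ℝ)]
      linarith
    have hu2 : (1:ℝ)/2 ≤ 1 - Real.exp (-t) ^ 2 := by linarith
    have hrpow : (1 - Real.exp (-t) ^ 2) ^ (-a) ≤ ((1:ℝ)/2) ^ (-a) :=
      Real.rpow_le_rpow_of_nonpos (by norm_num) hu2 (by linarith)
    have h2a : ((1:ℝ)/2) ^ (-a) ≤ 4 ^ a := by
      have : ((1:ℝ)/2) ^ (-a) = 2 ^ a := by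
        rw [Real.rpow_neg (by norm_num), one_div, Real.inv_rpow (by norm_num), inv_inv]
      rw [this]
      exact Real.rpow_le_rpow (by norm_num) (by norm_num) ha.le
    have hexp : Real.exp (-t) ≤ (d + 2).factorial * t ^ (-a) := by
      have hp : t ^ (d + 2) / (d + 2).factorial ≤ Real.exp t :=
        Real.pow_div_factorial_le_exp (x := t) ht.le (d + 2)
      have htp : (0:ℝ) < t ^ (d + 2) := pow_pos ht _
      have step1 : Real.exp (-t) ≤ (d + 2).factorial / t ^ (d + 2) := by
        have hpos : (0:ℝ) < t ^ (d + 2) / (d + 2).factorial := by positivity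
        have h := one_div_le_one_div_of_le hpos hp
        rw [one_div_div] at h
        rw [Real.exp_neg, inv_eq_one_div]
        exact h
      have step2 : (1:ℝ) / t ^ (d + 2) ≤ t ^ (-a) := by
        rw [one_div, ← Real.rpow_natCast t (d + 2), ← Real.rpow_neg ht.le]
        apply Real.rpow_le_rpow_of_exponent_le h1.le
        push_cast
        linarith
      calc Real.exp (-t) ≤ (d + 2).factorial / t ^ (d + 2) := step1
        _ = (d + 2).factorial * (1 / t ^ (d + 2)) := by ring
        _ ≤ (d + 2).factorial * t ^ (-a) :=
            mul_le_mul_of_nonneg_left step2 (by positivity)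
    calc Real.exp (-t) * (1 - Real.exp (-t) ^ 2) ^ (-a)
        ≤ ((d + 2).factorial * t ^ (-a)) * (4 ^ a) := by
          apply mul_le_mul hexp (hrpow.trans h2a) (by positivity) (by positivity)
      _ = 4 ^ a * (d + 2).factorial * t ^ (-a) := by ring


theorem stmt11 (d : ℕ) :
    ∃ C : ℝ, 0 < C ∧
      ∀ (x y y' : EuclideanSpace ℝ (Fin d)) (t : ℝ), 0 < t →
        |Dker d (x - y) t - Dker d (x - y') t|
          ≤ C * (‖y - y'‖ / Real.sqrt t) * t ^ (-(d : ℝ) / 2 - 1) := by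
  have hA : (0:ℝ) < Real.pi ^ (-(d : ℝ) / 2) := Real.rpow_pos_of_pos Real.pi_pos _
  have h4 : (0:ℝ) < (4:ℝ) ^ (((d : ℝ) + 3) / 2) := Real.rpow_pos_of_pos (by norm_num) _
  have hfac : (0:ℝ) < ((d + 2).factorial : ℝ) := by exact_mod_cast (d + 2).factorial_pos
  have hd : (0:ℝ) ≤ d := Nat.cast_nonneg d
  refine ⟨2 * Real.pi ^ (-(d : ℝ) / 2) * (2 * d + 14) *
    ((4 : ℝ) ^ (((d : ℝ) + 3) / 2) * (d + 2).factorial), by positivity, ?_⟩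
  intro x y y' t ht
  have hlip := Dker_lip d ht (x - y) (x - y')
  have hzz : (x - y) - (x - y') = y' - y := by abel
  rw [hzz, norm_sub_rev] at hlip
  have hrate := aux_rate d ht
  have hrhs : ‖y - y'‖ / Real.sqrt t * t ^ (-(d : ℝ) / 2 - 1) =
      ‖y - y'‖ * t ^ (-(((d : ℝ) + 3) / 2)) := by
    rw [Real.sqrt_eq_rpow, div_eq_mul_inv, ← Real.rpow_neg ht.le, mul_assoc, ← Real.rpow_add ht]
    congr 2
    ring
  calc |Dker d (x - y) t - Dker d (x - y') t|
      ≤ 2 * Real.pi ^ (-(d : ℝ) / 2) * (2 * d + 14) *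
        (Real.exp (-t) * (1 - Real.exp (-t) ^ 2) ^ (-(((d : ℝ) + 3) / 2))) * ‖y - y'‖ := hlip
    _ ≤ 2 * Real.pi ^ (-(d : ℝ) / 2) * (2 * d + 14) *
        ((4 : ℝ) ^ (((d : ℝ) + 3) / 2) * (d + 2).factorial * t ^ (-(((d : ℝ) + 3) / 2))) *
          ‖y - y'‖ :=
        mul_le_mul_of_nonneg_right (mul_le_mul_of_nonneg_left hrate (by positivity))
          (norm_nonneg _)
    _ = 2 * Real.pi ^ (-(d : ℝ) / 2) * (2 * d + 14) *
        ((4 : ℝ) ^ (((d : ℝ) + 3) / 2) * (d + 2).factorial) *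
          (‖y - y'‖ * t ^ (-(((d : ℝ) + 3) / 2))) := by ring
    _ = 2 * Real.pi ^ (-(d : ℝ) / 2) * (2 * d + 14) *
        ((4 : ℝ) ^ (((d : ℝ) + 3) / 2) * (d + 2).factorial) *
          (‖y - y'‖ / Real.sqrt t * t ^ (-(d : ℝ) / 2 - 1)) := by rw [hrhs]
    _ = _ := by ring
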